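/- Let X be a complex vector space with a semi-inner product [·,·]. If the semi-inner product is additive in the second argument, i.e. [x, y+z] = [x,y] + [x,z] for all x,y,z, then [x,y] = conj([y,x]) for all x,y ∈ X, and hence [·,·] is an inner product. Conversely, if [x,y] = conj([y,x]) for all x,y, then [·,·] is additive in the second argument. -/
import Mathlib


/-- A semi-inner product on a complex vector space `X`. -/
structure SemiInnerProduct (X : Type*) [AddCommGroup X] [Module ℂ X] where
  sip : X → X → ℂ
  add_left : ∀ x y z : X, sip (x + y) z = sip x z + sip y z
  smul_left : ∀ (α : ℂ) (x z : X), sip (α • x) z = α * sip x z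
  smul_right : ∀ (α : ℂ) (x y : X), sip x (α • y) = (starRingEnd ℂ) α * sip x y
  self_nonneg : ∀ x : X, 0 ≤ (sip x x).re
  self_im : ∀ x : X, (sip x x).im = 0
  definite : ∀ x : X, sip x x = 0 → x = 0
  cauchy_schwarz : ∀ x y : X, ‖sip x y‖ ^ 2 ≤ (sip x x).re * (sip y y).re


/-- a semi-inner product is additive in the second argument iff it is
conjugate-symmetric (and hence an inner product). -/
theorem sip_add_right_iff_conj_symm {X : Type*} [AddCommGroup X] [Module ℂ X]
    (S : SemiInnerProduct X) :
    ((∀ x y z : X, S.sip x (y + z) = S.sip x y + S.sip x z) →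
      ∀ x y : X, S.sip x y = (starRingEnd ℂ) (S.sip y x)) ∧
    ((∀ x y : X, S.sip x y = (starRingEnd ℂ) (S.sip y x)) →
      ∀ x y z : X, S.sip x (y + z) = S.sip x y + S.sip x z) := by
  constructor
  · intro h x y
    have real : ∀ z : X, (starRingEnd ℂ) (S.sip z z) = S.sip z z := fun z =>
      Complex.conj_eq_iff_im.mpr (S.self_im z)
    have expand : ∀ u v : X,
        S.sip (u + v) (u + v) = S.sip u u + S.sip u v + S.sip v u + S.sip v v := by
      intro u v
      rw [S.add_left, h, h]; ring
    have key : ∀ u v : X, S.sip u v + S.sip v u =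
        (starRingEnd ℂ) (S.sip u v) + (starRingEnd ℂ) (S.sip v u) := by
      intro u v
      have h1 := congrArg (starRingEnd ℂ) (expand u v)
      rw [real, map_add, map_add, map_add, real, real] at h1
      linear_combination h1 - expand u v
    have k1 := key x y
    have k2 := key x (Complex.I • y)
    rw [S.smul_right, S.smul_left] at k2
    simp only [map_mul, map_neg, Complex.conj_conj, Complex.conj_I, neg_neg] at k2
    linear_combination k1 / 2 + Complex.I / 2 * k2 +
      (S.sip x y - S.sip y x + (starRingEnd ℂ) (S.sip x y) - (starRingEnd ℂ) (S.sip y x)) / 2 *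
        Complex.I_mul_I
  · intro h x y z
    rw [h x (y + z), S.add_left, map_add, ← h, ← h]
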